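/- arXiv:2604.03887 — 3 statements merged into one kernel-verified Lean document; each statement's English description precedes it below -/
import Mathlib

section
/- With U_J as above, the map f : U_J → J sending u_a(x,y) to x is a surjective group homomorphism with kernel U_J⁰, and hence the abelianization of U_J is isomorphic to the additive group J = √t·F[√t]. -/
open Polynomial Matrix

/-- The involution of `F[√t]` (modelled as `F[X]` with `X = √t`) sending `√t ↦ -√t`. -/
noncomputable def bar (F : Type) [Field F] : Polynomial F →+* Polynomial F :=
  (Polynomial.aeval (-Polynomial.X : Polynomial F)).toRingHom

/-- The unipotent matrix `u_a(x,y)` with rows `(1, -x̄, y)`, `(0,1,x)`, `(0,0,1)`. -/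
noncomputable def ua (F : Type) [Field F] (x y : Polynomial F) :
    Matrix (Fin 3) (Fin 3) (Polynomial F) :=
  !![1, -(bar F x), y; 0, 1, x; 0, 0, 1]

/-- The matrix `u_{2a}(z) = I + z·E₁₃`. -/
noncomputable def u2a (F : Type) [Field F] (z : Polynomial F) :
    Matrix (Fin 3) (Fin 3) (Polynomial F) :=
  !![1, 0, z; 0, 1, 0; 0, 0, 1]

/-- The ideal `J = √t·F[√t]`. -/
noncomputable def Jid (F : Type) [Field F] : Ideal (Polynomial F) :=
  Ideal.span {Polynomial.X}

lemma bar_bar (F : Type) [Field F] (p : Polynomial F) : bar F (bar F p) = p := by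
  have h : (Polynomial.aeval (-Polynomial.X : Polynomial F)).comp
      (Polynomial.aeval (-Polynomial.X : Polynomial F)) = AlgHom.id F (Polynomial F) := by
    apply Polynomial.algHom_ext; simp
  have := congrArg (fun f : Polynomial F →ₐ[F] Polynomial F => f p) h
  simpa [bar] using this

lemma ua_mul (F : Type) [Field F] (x y x' y' : Polynomial F) :
    ua F x y * ua F x' y' = ua F (x + x') (y + y' - bar F x * x') := by
  simp [ua, Matrix.mul_fin_three, map_add]
  ring_nf
  try rfl
  try simp

/-- The group `U_J` of matrices `u_a(x,y)` with `x, y ∈ J` and `x·x̄ + y + ȳ = 0`,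
as a subgroup of the units of the ring of 3×3 matrices over `F[√t]`. -/
noncomputable def UJ (F : Type) [Field F] :
    Subgroup (Matrix (Fin 3) (Fin 3) (Polynomial F))ˣ where
  carrier := {g | ∃ x y : Polynomial F, x ∈ Jid F ∧ y ∈ Jid F ∧
    x * bar F x + y + bar F y = 0 ∧ (g : Matrix (Fin 3) (Fin 3) (Polynomial F)) = ua F x y}
  one_mem' := by
    refine ⟨0, 0, (Jid F).zero_mem, (Jid F).zero_mem, by simp, ?_⟩
    simp [ua, Matrix.one_fin_three]
  mul_mem' := by
    rintro a b ⟨x, y, hx, hy, hc, ha⟩ ⟨x', y', hx', hy', hc', hb⟩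
    refine ⟨x + x', y + y' - bar F x * x', (Jid F).add_mem hx hx',
      (Jid F).sub_mem ((Jid F).add_mem hy hy') (Ideal.mul_mem_left _ _ hx'), ?_, ?_⟩
    · simp only [map_add, map_sub, _root_.map_mul, bar_bar]
      ring_nf
      ring_nf at hc hc'
      linear_combination hc + hc'
    · rw [Units.val_mul, ha, hb, ua_mul]
  inv_mem' := by
    rintro a ⟨x, y, hx, hy, hc, ha⟩
    refine ⟨-x, -y - bar F x * x, (Jid F).neg_mem hx,
      (Jid F).sub_mem ((Jid F).neg_mem hy) (Ideal.mul_mem_left _ _ hx), ?_, ?_⟩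
    · simp only [map_add, map_sub, map_neg, _root_.map_mul, bar_bar]
      ring_nf
      ring_nf at hc
      linear_combination -hc
    · have h1 : (a : Matrix (Fin 3) (Fin 3) (Polynomial F)) *
          ua F (-x) (-y - bar F x * x) = 1 := by
        rw [ha, ua_mul]
        simp [ua, Matrix.one_fin_three]
        ring_nf
        try rfl
      exact Units.inv_eq_of_mul_eq_one_right h1

/-- The subgroup `U_J⁰ = {u_{2a}(z) : z ∈ J, z + z̄ = 0}`. -/
noncomputable def UJ0 (F : Type) [Field F] :
    Subgroup (Matrix (Fin 3) (Fin 3) (Polynomial F))ˣ where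
  carrier := {g | ∃ z : Polynomial F, z ∈ Jid F ∧ z + bar F z = 0 ∧
    (g : Matrix (Fin 3) (Fin 3) (Polynomial F)) = u2a F z}
  one_mem' := by
    refine ⟨0, (Jid F).zero_mem, by simp, ?_⟩
    simp [u2a, Matrix.one_fin_three]
  mul_mem' := by
    rintro a b ⟨z, hz, hz0, ha⟩ ⟨w, hw, hw0, hb⟩
    refine ⟨z + w, (Jid F).add_mem hz hw, ?_, ?_⟩
    · rw [map_add]; linear_combination hz0 + hw0
    · rw [Units.val_mul, ha, hb]
      simp [u2a, Matrix.mul_fin_three]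
      ring_nf
      try rfl
  inv_mem' := by
    rintro a ⟨z, hz, hz0, ha⟩
    refine ⟨-z, (Jid F).neg_mem hz, by rw [map_neg]; linear_combination -hz0, ?_⟩
    have h1 : (a : Matrix (Fin 3) (Fin 3) (Polynomial F)) * u2a F (-z) = 1 := by
      rw [ha]
      simp [u2a, Matrix.mul_fin_three, Matrix.one_fin_three]
    exact Units.inv_eq_of_mul_eq_one_right h1

section Aux

variable (F : Type) [Field F]

lemma bar_C (c : F) : bar F (Polynomial.C c) = Polynomial.C c := by simp [bar]

lemma bar_X : bar F Polynomial.X = -Polynomial.X := by simp [bar]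

lemma ua_12 (x y : Polynomial F) : ua F x y 1 2 = x := by simp [ua]

lemma ua_02 (x y : Polynomial F) : ua F x y 0 2 = y := by simp [ua]

lemma ua_zero : ua F 0 0 = 1 := by
  simp [ua, Matrix.one_fin_three]

lemma ua_eq_u2a (y : Polynomial F) : ua F 0 y = u2a F y := by
  simp [ua, u2a]

lemma X_mem_Jid : (Polynomial.X : Polynomial F) ∈ Jid F :=
  Ideal.mem_span_singleton.mpr dvd_rfl

lemma coeff1_sq (r : Polynomial F) :
    (Polynomial.X * (Polynomial.X * r)).coeff 1 = 0 := by
  rw [show (1:ℕ) = 0 + 1 from rfl, Polynomial.coeff_X_mul, Polynomial.coeff_X_mul_zero]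

lemma coeff1_bar_mul {x x' : Polynomial F} (hx : x ∈ Jid F) (hx' : x' ∈ Jid F) :
    (bar F x * x').coeff 1 = 0 := by
  obtain ⟨p, hp⟩ := Ideal.mem_span_singleton.mp hx
  obtain ⟨q, hq⟩ := Ideal.mem_span_singleton.mp hx'
  have h : bar F x * x' = Polynomial.X * (Polynomial.X * -(bar F p * q)) := by
    rw [hp, hq, _root_.map_mul, bar_X]; ring
  rw [h, coeff1_sq]

lemma coeff1_mul_bar {x x' : Polynomial F} (hx : x ∈ Jid F) (hx' : x' ∈ Jid F) :
    (x * bar F x').coeff 1 = 0 := by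
  obtain ⟨p, hp⟩ := Ideal.mem_span_singleton.mp hx
  obtain ⟨q, hq⟩ := Ideal.mem_span_singleton.mp hx'
  have h : x * bar F x' = Polynomial.X * (Polynomial.X * -(p * bar F q)) := by
    rw [hp, hq, _root_.map_mul, bar_X]; ring
  rw [h, coeff1_sq]

/-- Build an element of `UJ F` from data. -/
noncomputable def mkU (x y : Polynomial F) (hx : x ∈ Jid F) (hy : y ∈ Jid F)
    (hc : x * bar F x + y + bar F y = 0) : UJ F :=
  ⟨⟨ua F x y, ua F (-x) (-y - bar F x * x),
    by
      rw [ua_mul]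
      have h1 : x + -x = 0 := by ring
      have h2 : y + (-y - bar F x * x) - bar F x * -x = 0 := by ring
      rw [h1, h2, ua_zero],
    by
      rw [ua_mul]
      have h1 : -x + x = 0 := by ring
      have h2 : -y - bar F x * x + y - bar F (-x) * x = 0 := by
        rw [map_neg]; ring
      rw [h1, h2, ua_zero]⟩,
   ⟨x, y, hx, hy, hc, rfl⟩⟩

lemma mkU_val (x y : Polynomial F) (hx : x ∈ Jid F) (hy : y ∈ Jid F)
    (hc : x * bar F x + y + bar F y = 0) :
    (((mkU F x y hx hy hc : UJ F) : (Matrix (Fin 3) (Fin 3) (Polynomial F))ˣ) :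
      Matrix (Fin 3) (Fin 3) (Polynomial F)) = ua F x y := rfl

lemma hC2 (h2 : (2:F) ≠ 0) : (Polynomial.C (2⁻¹:F)) * 2 = 1 := by
  rw [show (2 : Polynomial F) = Polynomial.C 2 from (map_ofNat Polynomial.C 2).symm, ← Polynomial.C_mul,
    inv_mul_cancel₀ h2, Polynomial.C_1]

lemma std_hy (x : Polynomial F) (hx : x ∈ Jid F) (a : F) :
    Polynomial.C (2⁻¹:F) * -(x * bar F x) + Polynomial.C a * Polynomial.X ∈ Jid F := by
  refine Ideal.add_mem _ (Ideal.mul_mem_left _ _ ((Jid F).neg_mem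
    (Ideal.mul_mem_right _ _ hx))) ?_
  exact Ideal.mem_span_singleton.mpr (dvd_mul_left _ _)

lemma std_hc (h2 : (2:F) ≠ 0) (x : Polynomial F) (a : F) :
    x * bar F x + (Polynomial.C (2⁻¹:F) * -(x * bar F x) + Polynomial.C a * Polynomial.X)
      + bar F (Polynomial.C (2⁻¹:F) * -(x * bar F x) + Polynomial.C a * Polynomial.X) = 0 := by
  have hC := hC2 F h2
  rw [map_add, _root_.map_mul, _root_.map_mul, map_neg, _root_.map_mul, bar_C, bar_C,
    bar_bar, bar_X]
  linear_combination (-(x * bar F x)) * hC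

/-- Standard element of `UJ F` with prescribed `x` and prescribed coefficient
`a` of `X` in `y`. -/
noncomputable def stdU (h2 : (2:F) ≠ 0) (x : Polynomial F) (hx : x ∈ Jid F) (a : F) : UJ F :=
  mkU F x _ hx (std_hy F x hx a) (std_hc F h2 x a)

end Aux

section Aux2

variable (F : Type) [Field F]

/-- The homomorphism `u_a(x,y) ↦ x` (read off the `(1,2)` entry). -/
noncomputable def fmap : UJ F →* Multiplicative (Polynomial F) :=
  MonoidHom.mk' (fun g => Multiplicative.ofAdd
      (((g : (Matrix (Fin 3) (Fin 3) (Polynomial F))ˣ) :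
        Matrix (Fin 3) (Fin 3) (Polynomial F)) 1 2))
    (by
      rintro ⟨a, x, y, hx, hy, hc, ha⟩ ⟨b, x', y', hx', hy', hc', hb⟩
      simp only [Subgroup.coe_mul, Units.val_mul, ha, hb, ua_mul, ua_12]
      rfl)

lemma memJ_aux (a : F) (x : Polynomial F) :
    Polynomial.C a * Polynomial.X + Polynomial.X * x ∈ Jid F :=
  Ideal.add_mem _ (Ideal.mem_span_singleton.mpr (dvd_mul_left _ _))
    (Ideal.mul_mem_right _ _ (X_mem_Jid F))

/-- The refined homomorphism `u_a(x,y) ↦ (coeff 1 y)·X + X·x ∈ J`. -/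
noncomputable def phimap : UJ F →* Multiplicative ↥(Jid F) :=
  MonoidHom.mk' (fun g => Multiplicative.ofAdd
      (⟨Polynomial.C ((((g : (Matrix (Fin 3) (Fin 3) (Polynomial F))ˣ) :
            Matrix (Fin 3) (Fin 3) (Polynomial F)) 0 2).coeff 1) * Polynomial.X +
          Polynomial.X * (((g : (Matrix (Fin 3) (Fin 3) (Polynomial F))ˣ) :
            Matrix (Fin 3) (Fin 3) (Polynomial F)) 1 2),
        memJ_aux F _ _⟩ : ↥(Jid F)))
    (by
      rintro ⟨a, x, y, hx, hy, hc, ha⟩ ⟨b, x', y', hx', hy', hc', hb⟩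
      refine congrArg Multiplicative.ofAdd (Subtype.ext ?_)
      show _ = (⟨_, _⟩ : ↥(Jid F)).1 + (⟨_, _⟩ : ↥(Jid F)).1
      simp only [Subgroup.coe_mul, Units.val_mul, ha, hb, ua_mul, ua_12, ua_02,
        Polynomial.coeff_add, Polynomial.coeff_sub, coeff1_bar_mul F hx hx', map_add, map_sub,
        Polynomial.C_0, sub_zero]
      ring)

end Aux2

section Aux3

variable (F : Type) [Field F]

open scoped commutatorElement

lemma fmap_mkU (x y : Polynomial F) (hx : x ∈ Jid F) (hy : y ∈ Jid F)
    (hc : x * bar F x + y + bar F y = 0) :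
    fmap F (mkU F x y hx hy hc) = Multiplicative.ofAdd x := by
  show Multiplicative.ofAdd (ua F x y 1 2) = _
  rw [ua_12]

lemma phimap_stdU (h2 : (2:F) ≠ 0) (x : Polynomial F) (hx : x ∈ Jid F) (a : F) :
    phimap F (stdU F h2 x hx a) = Multiplicative.ofAdd
      (⟨Polynomial.C a * Polynomial.X + Polynomial.X * x, memJ_aux F a x⟩ : ↥(Jid F)) := by
  refine congrArg Multiplicative.ofAdd (Subtype.ext ?_)
  show Polynomial.C ((ua F x _ 0 2).coeff 1) * Polynomial.X +
      Polynomial.X * (ua F x _ 1 2) = _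
  rw [ua_12, ua_02]
  congr 2
  rw [Polynomial.coeff_add, Polynomial.coeff_C_mul, Polynomial.coeff_neg,
    coeff1_mul_bar F hx hx, Polynomial.coeff_C_mul, Polynomial.coeff_X_one]
  ring

lemma phimap_surj (h2 : (2:F) ≠ 0) : Function.Surjective (phimap F) := by
  intro w
  obtain ⟨u, hu⟩ := Ideal.mem_span_singleton.mp (w.toAdd.2)
  refine ⟨stdU F h2 (Polynomial.X * u.divX)
    (Ideal.mul_mem_right _ _ (X_mem_Jid F)) (u.coeff 0), ?_⟩
  rw [phimap_stdU]
  have : (⟨Polynomial.C (u.coeff 0) * Polynomial.X +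
      Polynomial.X * (Polynomial.X * u.divX), memJ_aux F _ _⟩ : ↥(Jid F)) = w.toAdd := by
    refine Subtype.ext ?_
    rw [hu]
    have h := Polynomial.X_mul_divX_add u
    linear_combination Polynomial.X * h
  rw [this]
  rfl

lemma mem_ker_commutator (h2 : (2:F) ≠ 0) (g : UJ F) (hg : phimap F g = 1) :
    ∃ A B : UJ F, g = ⁅A, B⁆ := by
  obtain ⟨x, y, hx, hy, hc, hM⟩ := g.2
  -- read off the condition
  have hval : Polynomial.C (y.coeff 1) * Polynomial.X + Polynomial.X * x = 0 := by
    have := congrArg (fun w => (Multiplicative.toAdd w : ↥(Jid F)).1) hg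
    simpa [phimap, hM, ua_12, ua_02] using this
  obtain ⟨p, hp⟩ := Ideal.mem_span_singleton.mp hx
  have ha0 : y.coeff 1 = 0 := by
    have h1 : (Polynomial.C (y.coeff 1) * Polynomial.X + Polynomial.X * x).coeff 1
        = y.coeff 1 := by
      rw [hp, Polynomial.coeff_add, coeff1_sq, Polynomial.coeff_C_mul,
        Polynomial.coeff_X_one, add_zero, mul_one]
    rw [← h1, hval, Polynomial.coeff_zero]
  have hx0 : x = 0 := by
    rw [ha0, Polynomial.C_0, zero_mul, zero_add] at hval
    exact (mul_eq_zero.mp hval).resolve_left Polynomial.X_ne_zero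
  subst hx0
  -- now g is u2a(y) with y odd and coeff 1 zero
  have hbary : bar F y = -y := by
    have := hc
    rw [zero_mul, zero_add] at this
    linear_combination this
  obtain ⟨u, hu⟩ := Ideal.mem_span_singleton.mp hy
  have hXne : (Polynomial.X : Polynomial F) ≠ 0 := Polynomial.X_ne_zero
  have hbaru : bar F u = u := by
    have h1 : Polynomial.X * bar F u = Polynomial.X * u := by
      have := hbary
      rw [hu, _root_.map_mul, bar_X] at this
      linear_combination -this
    exact mul_left_cancel₀ hXne h1
  have hu0 : u.coeff 0 = 0 := by
    have := ha0
    rw [hu, show (1:ℕ) = 0 + 1 from rfl, Polynomial.coeff_X_mul] at this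
    exact this
  have huJ : u ∈ Jid F := Ideal.mem_span_singleton.mpr (Polynomial.X_dvd_iff.mpr hu0)
  set x' : Polynomial F := Polynomial.C (2⁻¹:F) * u with hx'def
  have hx'J : x' ∈ Jid F := Ideal.mul_mem_left _ _ huJ
  have hbarx' : bar F x' = x' := by
    rw [hx'def, _root_.map_mul, bar_C, hbaru]
  set A : UJ F := stdU F h2 Polynomial.X (X_mem_Jid F) 0 with hA
  set B : UJ F := stdU F h2 x' hx'J 0 with hB
  refine ⟨A, B, ?_⟩
  have hC := hC2 F h2
  have key : A * B = g * (B * A) := by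
    apply Subtype.ext
    apply Units.ext
    show ((A : (Matrix (Fin 3) (Fin 3) (Polynomial F))ˣ) :
        Matrix (Fin 3) (Fin 3) (Polynomial F)) * _ = _ * (_ * _)
    rw [hM]
    show ua F Polynomial.X _ * ua F x' _ = ua F 0 y * (ua F x' _ * ua F Polynomial.X _)
    rw [ua_mul, ua_mul, ua_mul]
    have harg1 : Polynomial.X + x' = 0 + (x' + Polynomial.X) := by ring
    have harg2 : (Polynomial.C (2⁻¹:F) * -(Polynomial.X * bar F Polynomial.X) +
          Polynomial.C 0 * Polynomial.X) +
        (Polynomial.C (2⁻¹:F) * -(x' * bar F x') + Polynomial.C 0 * Polynomial.X) -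
          bar F Polynomial.X * x' =
        y + ((Polynomial.C (2⁻¹:F) * -(x' * bar F x') + Polynomial.C 0 * Polynomial.X) +
          (Polynomial.C (2⁻¹:F) * -(Polynomial.X * bar F Polynomial.X) +
            Polynomial.C 0 * Polynomial.X) - bar F x' * Polynomial.X) -
          bar F 0 * (x' + Polynomial.X) := by
      rw [bar_X, hbarx', show bar F (0 : Polynomial F) = 0 from map_zero _, hu, hx'def]
      linear_combination Polynomial.X * u * hC
    rw [harg1, harg2]
  calc g = (g * (B * A)) * (B * A)⁻¹ := by group
    _ = (A * B) * (B * A)⁻¹ := by rw [key]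
    _ = ⁅A, B⁆ := by group
end Aux3

open scoped commutatorElement

/-- the map `f : U_J → J`, `u_a(x,y) ↦ x` (reading off the `(2,3)` entry),
is a surjective group homomorphism onto the additive group `J = √t·F[√t]` with kernel
`U_J⁰`, and hence the abelianization of `U_J` is isomorphic to the additive group `J`. -/
theorem stmt4 (F : Type) [Field F] (hchar : ringChar F ≠ 2) :
    ∃ f : UJ F →* Multiplicative (Polynomial F),
      (∀ g : UJ F,
        (f g).toAdd = ((g : (Matrix (Fin 3) (Fin 3) (Polynomial F))ˣ) :
          Matrix (Fin 3) (Fin 3) (Polynomial F)) 1 2) ∧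
      Set.range f = Multiplicative.ofAdd '' ((Jid F : Set (Polynomial F))) ∧
      f.ker = (UJ0 F).subgroupOf (UJ F) ∧
      Nonempty (Abelianization (UJ F) ≃* Multiplicative (Jid F)) := by
  have h2 : (2:F) ≠ 0 := Ring.two_ne_zero hchar
  refine ⟨fmap F, fun g => rfl, ?_, ?_, ?_⟩
  · -- range
    ext w
    constructor
    · rintro ⟨g, rfl⟩
      obtain ⟨x, y, hx, hy, hc, hM⟩ := g.2
      refine ⟨x, hx, ?_⟩
      have hentry : ((g : (Matrix (Fin 3) (Fin 3) (Polynomial F))ˣ) :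
          Matrix (Fin 3) (Fin 3) (Polynomial F)) 1 2 = x := by rw [hM, ua_12]
      exact (congrArg Multiplicative.ofAdd hentry).symm
    · rintro ⟨v, hv, rfl⟩
      exact ⟨stdU F h2 v hv 0, by
        rw [show stdU F h2 v hv 0 = mkU F v _ hv (std_hy F v hv 0) (std_hc F h2 v 0) from rfl,
          fmap_mkU]⟩
  · -- kernel
    ext g
    rw [MonoidHom.mem_ker, Subgroup.mem_subgroupOf]
    constructor
    · intro h
      obtain ⟨x, y, hx, hy, hc, hM⟩ := g.2
      have hx0 : x = 0 := by
        have := congrArg Multiplicative.toAdd h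
        simpa [fmap, hM, ua_12] using this
      subst hx0
      refine ⟨y, hy, ?_, by rw [hM, ua_eq_u2a]⟩
      have := hc
      rw [zero_mul, zero_add] at this
      exact this
    · rintro ⟨z, hz, hz0, hM⟩
      have hentry : ((g : (Matrix (Fin 3) (Fin 3) (Polynomial F))ˣ) :
          Matrix (Fin 3) (Fin 3) (Polynomial F)) 1 2 = 0 := by rw [hM]; simp [u2a]
      show Multiplicative.ofAdd (((g : (Matrix (Fin 3) (Fin 3) (Polynomial F))ˣ) :
          Matrix (Fin 3) (Fin 3) (Polynomial F)) 1 2) = 1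
      rw [hentry]
      rfl
  · -- abelianization
    have hsurj : Function.Surjective (Abelianization.lift (phimap F)) := by
      intro w
      obtain ⟨g, hg⟩ := phimap_surj F h2 w
      exact ⟨Abelianization.of g, by rwa [Abelianization.lift_apply_of]⟩
    have hinj : Function.Injective (Abelianization.lift (phimap F)) := by
      rw [injective_iff_map_eq_one]
      intro q hq
      induction q using QuotientGroup.induction_on with
      | H g =>
        rw [show (QuotientGroup.mk g : Abelianization ↥(UJ F)) = Abelianization.of g from rfl,
          Abelianization.lift_apply_of] at hq
        show Abelianization.of g = 1
        obtain ⟨A, B, rfl⟩ := mem_ker_commutator F h2 g hq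
        rw [show Abelianization.of ⁅A, B⁆ = ⁅Abelianization.of A, Abelianization.of B⁆ from
          map_commutatorElement _ _ _]
        exact commutatorElement_eq_one_iff_commute.mpr (mul_comm _ _)
    exact ⟨MulEquiv.ofBijective _ ⟨hinj, hsurj⟩⟩
end

section
/- Let F be a field with char(F) ≠ 2, and let q : F³ → F be the quadratic form q(x,y,z) = 2xz + y². Then the special orthogonal group SO(q)(F) is isomorphic to PGL₂(F). -/
open Matrix

/-- The Gram matrix of the quadratic form `q(x,y,z) = 2xz + y²` on `F³`. -/
def Smat (R : Type) [CommRing R] : Matrix (Fin 3) (Fin 3) R :=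
  !![0, 0, 1; 0, 1, 0; 1, 0, 0]

/-- `SO(q)(F)`: 3×3 matrices of determinant 1 preserving `q(x,y,z) = 2xz + y²`. -/
def SOq (F : Type) [Field F] : Subgroup (Matrix (Fin 3) (Fin 3) F)ˣ where
  carrier := {h | ((h : Matrix (Fin 3) (Fin 3) F)).det = 1 ∧
    (h : Matrix (Fin 3) (Fin 3) F)ᵀ * Smat F * (h : Matrix (Fin 3) (Fin 3) F) = Smat F}
  one_mem' := by constructor <;> simp
  mul_mem' := by
    rintro a b ⟨hda, ha⟩ ⟨hdb, hb⟩
    set A := (a : Matrix (Fin 3) (Fin 3) F)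
    set B := (b : Matrix (Fin 3) (Fin 3) F)
    refine ⟨by rw [Units.val_mul, Matrix.det_mul]; rw [hda, hdb, one_mul], ?_⟩
    show (A * B)ᵀ * Smat F * (A * B) = Smat F
    rw [show (A * B)ᵀ * Smat F * (A * B) = Bᵀ * (Aᵀ * Smat F * A) * B by
      rw [Matrix.transpose_mul]; noncomm_ring, ha, hb]
  inv_mem' := by
    rintro a ⟨hda, ha⟩
    set A := (a : Matrix (Fin 3) (Fin 3) F)
    set A' := ((a⁻¹ : (Matrix (Fin 3) (Fin 3) F)ˣ) : Matrix (Fin 3) (Fin 3) F)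
    have hmul : A * A' = 1 := a.mul_inv
    constructor
    · have h := congrArg Matrix.det hmul
      rw [Matrix.det_mul, hda, one_mul, Matrix.det_one] at h
      exact h
    · show A'ᵀ * Smat F * A' = Smat F
      conv_lhs => rw [← ha]
      rw [show A'ᵀ * (Aᵀ * Smat F * A) * A' = (A * A')ᵀ * Smat F * (A * A') by
        rw [Matrix.transpose_mul]; noncomm_ring, hmul]
      simp

/-- `PGL₂(F) = GL₂(F)/Fˣ`, realized as `GL₂(F)` modulo its center. -/
abbrev PGL2 (F : Type) [Field F] : Type :=
  GL (Fin 2) F ⧸ Subgroup.center (GL (Fin 2) F)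

variable {F : Type} [Field F]

def Nmat (g : Matrix (Fin 2) (Fin 2) F) : Matrix (Fin 3) (Fin 3) F :=
  !![2*g 0 0^2, -4*(g 0 0*g 0 1), -4*g 0 1^2;
     -2*(g 0 0*g 1 0), 2*(g 0 0*g 1 1) + 2*(g 0 1*g 1 0), 4*(g 0 1*g 1 1);
     -g 1 0^2, 2*(g 1 0*g 1 1), 2*g 1 1^2]

theorem Nmat_mul (a b : Matrix (Fin 2) (Fin 2) F) :
    (2:F) • Nmat (a * b) = Nmat a * Nmat b := by
  ext i j
  fin_cases i <;> fin_cases j <;>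
    · simp [Nmat, Matrix.mul_apply, Fin.sum_univ_two, Fin.sum_univ_three]
      ring

theorem Nmat_det (g : Matrix (Fin 2) (Fin 2) F) : (Nmat g).det = 8 * g.det ^ 3 := by
  simp [Nmat, Matrix.det_fin_three, Matrix.det_fin_two]
  ring

theorem Nmat_transpose (g : Matrix (Fin 2) (Fin 2) F) :
    (Nmat g)ᵀ = !![2*g 0 0^2, -2*(g 0 0*g 1 0), -g 1 0^2;
     -4*(g 0 0*g 0 1), 2*(g 0 0*g 1 1) + 2*(g 0 1*g 1 0), 2*(g 1 0*g 1 1);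
     -4*g 0 1^2, 4*(g 0 1*g 1 1), 2*g 1 1^2] := by
  ext i j
  fin_cases i <;> fin_cases j <;> simp [Nmat, Matrix.transpose_apply]

theorem Nmat_form (g : Matrix (Fin 2) (Fin 2) F) :
    (Nmat g)ᵀ * Smat F * Nmat g = (4 * g.det ^ 2) • Smat F := by
  rw [Nmat_transpose]
  ext i j
  fin_cases i <;> fin_cases j <;>
    · simp [Nmat, Smat, Matrix.mul_apply, Fin.sum_univ_three, Matrix.det_fin_two,
        Matrix.vecHead, Matrix.vecTail]
      ring

def phi (g : Matrix (Fin 2) (Fin 2) F) : Matrix (Fin 3) (Fin 3) F :=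
  (2 * g.det)⁻¹ • Nmat g

theorem phi_one (h2 : (2:F) ≠ 0) : phi (1 : Matrix (Fin 2) (Fin 2) F) = 1 := by
  ext i j
  fin_cases i <;> fin_cases j <;>
    · simp [phi, Nmat, Matrix.one_apply, Matrix.vecHead, Matrix.vecTail]
      try field_simp

theorem phi_mul (h2 : (2:F) ≠ 0) {a b : Matrix (Fin 2) (Fin 2) F}
    (ha : a.det ≠ 0) (hb : b.det ≠ 0) : phi (a * b) = phi a * phi b := by
  have key : ((2 * a.det)⁻¹ • Nmat a) * ((2 * b.det)⁻¹ • Nmat b)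
      = ((2 * a.det)⁻¹ * (2 * b.det)⁻¹) • (Nmat a * Nmat b) := by
    rw [Matrix.smul_mul, Matrix.mul_smul, smul_smul]
  rw [phi, phi, phi, key, ← Nmat_mul, smul_smul, Matrix.det_mul]
  congr 1
  field_simp

theorem phi_det {g : Matrix (Fin 2) (Fin 2) F} (h2 : (2:F) ≠ 0) (hg : g.det ≠ 0) :
    (phi g).det = 1 := by
  rw [phi, Matrix.det_smul, Nmat_det, Fintype.card_fin]
  field_simp
  ring

theorem phi_form {g : Matrix (Fin 2) (Fin 2) F} (h2 : (2:F) ≠ 0) (hg : g.det ≠ 0) :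
    (phi g)ᵀ * Smat F * phi g = Smat F := by
  rw [phi, Matrix.transpose_smul, Matrix.smul_mul, Matrix.mul_smul, Matrix.smul_mul,
    Nmat_form, smul_smul, smul_smul]
  rw [show ((2 * g.det)⁻¹ * (2 * g.det)⁻¹ * (4 * g.det ^ 2) : F) = 1 by field_simp; ring,
    one_smul]

theorem mem_SOq_iff (u : (Matrix (Fin 3) (Fin 3) F)ˣ) :
    u ∈ SOq F ↔ ((u : Matrix (Fin 3) (Fin 3) F)).det = 1 ∧
      (u : Matrix (Fin 3) (Fin 3) F)ᵀ * Smat F * (u : Matrix (Fin 3) (Fin 3) F) = Smat F :=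
  Iff.rfl

theorem detGL_ne (g : GL (Fin 2) F) : ((g : Matrix (Fin 2) (Fin 2) F)).det ≠ 0 := by
  have := (Matrix.isUnit_iff_isUnit_det (g : Matrix (Fin 2) (Fin 2) F)).mp g.isUnit
  exact this.ne_zero

/-- `phi` as a unit. -/
noncomputable def phiUnit (h2 : (2:F) ≠ 0) (g : GL (Fin 2) F) : (Matrix (Fin 3) (Fin 3) F)ˣ where
  val := phi (g : Matrix (Fin 2) (Fin 2) F)
  inv := phi ((g⁻¹ : GL (Fin 2) F) : Matrix (Fin 2) (Fin 2) F)
  val_inv := by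
    rw [← phi_mul h2 (detGL_ne g) (detGL_ne g⁻¹), ← Units.val_mul, mul_inv_cancel, Units.val_one,
      phi_one h2]
  inv_val := by
    rw [← phi_mul h2 (detGL_ne g⁻¹) (detGL_ne g), ← Units.val_mul, inv_mul_cancel, Units.val_one,
      phi_one h2]

noncomputable def PhiHom (h2 : (2:F) ≠ 0) : GL (Fin 2) F →* SOq F where
  toFun g := ⟨phiUnit h2 g, phi_det h2 (detGL_ne g), phi_form h2 (detGL_ne g)⟩
  map_one' := by
    apply Subtype.ext; apply Units.ext
    show phi ((1 : GL (Fin 2) F) : Matrix (Fin 2) (Fin 2) F) = 1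
    rw [Units.val_one, phi_one h2]
  map_mul' a b := by
    apply Subtype.ext; apply Units.ext
    show phi ((a * b : GL (Fin 2) F) : Matrix (Fin 2) (Fin 2) F) = _
    rw [Units.val_mul, phi_mul h2 (detGL_ne a) (detGL_ne b)]
    rfl

theorem mul_unit_literals :
    (!![1, 1; 0, 1] : Matrix (Fin 2) (Fin 2) F) * !![1, -1; 0, 1] = 1 ∧
    (!![1, -1; 0, 1] : Matrix (Fin 2) (Fin 2) F) * !![1, 1; 0, 1] = 1 ∧
    (!![1, 0; 1, 1] : Matrix (Fin 2) (Fin 2) F) * !![1, 0; -1, 1] = 1 ∧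
    (!![1, 0; -1, 1] : Matrix (Fin 2) (Fin 2) F) * !![1, 0; 1, 1] = 1 := by
  refine ⟨?_, ?_, ?_, ?_⟩ <;>
    · ext i j
      fin_cases i <;> fin_cases j <;>
        simp [Matrix.mul_apply, Fin.sum_univ_two, Matrix.one_apply]

theorem ker_PhiHom (h2 : (2:F) ≠ 0) :
    (PhiHom (F := F) h2).ker = Subgroup.center (GL (Fin 2) F) := by
  ext g
  set G : Matrix (Fin 2) (Fin 2) F := (g : Matrix (Fin 2) (Fin 2) F) with hGdef
  constructor
  · intro hg
    have h1 : phi G = 1 := congrArg (fun x => ((x : SOq F) : (Matrix (Fin 3) (Fin 3) F)ˣ).val) hg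
    have hΔ : G.det ≠ 0 := detGL_ne g
    have h2Δ : (2 * G.det : F) ≠ 0 := mul_ne_zero h2 hΔ
    have hN : Nmat G = (2 * G.det) • (1 : Matrix (Fin 3) (Fin 3) F) := by
      rw [← h1, phi, smul_smul, mul_inv_cancel₀ h2Δ, one_smul]
    have e : ∀ i j, Nmat G i j = (2 * G.det) • (1 : Matrix (Fin 3) (Fin 3) F) i j :=
      fun i j => congrFun (congrFun hN i) j
    have e00 : 2 * G 0 0 ^ 2 = 2 * G.det := by simpa [Nmat, Matrix.one_apply] using e 0 0
    have e01 : -4 * (G 0 0 * G 0 1) = 0 := by simpa [Nmat, Matrix.one_apply] using e 0 1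
    have e10 : -2 * (G 0 0 * G 1 0) = 0 := by simpa [Nmat, Matrix.one_apply] using e 1 0
    have e22 : 2 * G 1 1 ^ 2 = 2 * G.det := by simpa [Nmat, Matrix.one_apply] using e 2 2
    have c2 : ∀ x : F, 2 * x = 0 → x = 0 := fun x hx =>
      (mul_eq_zero.mp hx).resolve_left h2
    have hp : G 0 0 ≠ 0 := by
      intro h0
      apply hΔ
      apply c2
      rw [h0] at e00
      linear_combination -e00
    have hq : G 0 1 = 0 := by
      have h5 : G 0 0 * G 0 1 = 0 := c2 _ (c2 _ (by linear_combination -e01))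
      exact (mul_eq_zero.mp h5).resolve_left hp
    have hr : G 1 0 = 0 := by
      have h5 : G 0 0 * G 1 0 = 0 := c2 _ (by linear_combination -e10)
      exact (mul_eq_zero.mp h5).resolve_left hp
    have hdet2 : G.det = G 0 0 * G 1 1 := by rw [Matrix.det_fin_two, hq, hr]; ring
    have hu : G 1 1 = G 0 0 := by
      have h5 : G 0 0 * (G 0 0 - G 1 1) = 0 := c2 _ (by linear_combination e00 + 2 * hdet2)
      have := (mul_eq_zero.mp h5).resolve_left hp
      linear_combination -this
    have hG : G = G 0 0 • (1 : Matrix (Fin 2) (Fin 2) F) := by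
      ext i j
      fin_cases i <;> fin_cases j <;> simp [Matrix.one_apply, hq, hr, hu]
    rw [Subgroup.mem_center_iff]
    intro z
    apply Units.ext
    show (z : Matrix (Fin 2) (Fin 2) F) * G = G * (z : Matrix (Fin 2) (Fin 2) F)
    rw [hG, Matrix.mul_smul, Matrix.smul_mul, Matrix.mul_one, Matrix.one_mul]
  · intro hg
    have comm := Subgroup.mem_center_iff.mp hg
    obtain ⟨m1, m2, m3, m4⟩ := mul_unit_literals (F := F)
    set T : GL (Fin 2) F := ⟨!![1, 1; 0, 1], !![1, -1; 0, 1], m1, m2⟩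
    set T' : GL (Fin 2) F := ⟨!![1, 0; 1, 1], !![1, 0; -1, 1], m3, m4⟩
    have hT := congrArg Units.val (comm T)
    have hT' := congrArg Units.val (comm T')
    have hT2 : !![(1:F), 1; 0, 1] * G = G * !![1, 1; 0, 1] := hT
    have hT'2 : !![(1:F), 0; 1, 1] * G = G * !![1, 0; 1, 1] := hT'
    have er : G 1 0 = 0 := by
      have := congrFun (congrFun hT2 0) 0
      simp [Matrix.mul_apply, Fin.sum_univ_two] at this
      linear_combination this
    have eu : G 1 1 = G 0 0 := by
      have := congrFun (congrFun hT2 0) 1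
      simp [Matrix.mul_apply, Fin.sum_univ_two] at this
      linear_combination this
    have eq' : G 0 1 = 0 := by
      have := congrFun (congrFun hT'2 0) 0
      simp [Matrix.mul_apply, Fin.sum_univ_two] at this
      exact this
    have hp : G 0 0 ≠ 0 := by
      intro h0
      apply detGL_ne g
      rw [← hGdef, Matrix.det_fin_two, er, eq', h0]
      ring
    show PhiHom h2 g = 1
    apply Subtype.ext
    apply Units.ext
    show phi G = 1
    have hdet2 : G.det = G 0 0 * G 0 0 := by rw [Matrix.det_fin_two, er, eq', eu]; ring
    ext i j
    fin_cases i <;> fin_cases j <;>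
      · simp [phi, Nmat, Matrix.one_apply, hdet2, er, eq', eu, Matrix.vecHead, Matrix.vecTail]
        try field_simp [hp, h2]
        try ring

noncomputable def mkGL (M : Matrix (Fin 2) (Fin 2) F) (hM : M.det ≠ 0) : GL (Fin 2) F :=
  ⟨M, M⁻¹, Matrix.mul_nonsing_inv M (isUnit_iff_ne_zero.mpr hM),
    Matrix.nonsing_inv_mul M (isUnit_iff_ne_zero.mpr hM)⟩

theorem PhiHom_surjective (h2 : (2:F) ≠ 0) : Function.Surjective (PhiHom (F := F) h2) := by
  rintro ⟨h, hmem⟩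
  obtain ⟨hdet, hform⟩ := (mem_SOq_iff h).mp hmem
  set H : Matrix (Fin 3) (Fin 3) F := (h : Matrix (Fin 3) (Fin 3) F) with hHdef
  have E00 : H 0 0 * H 2 0 + H 1 0 * H 1 0 + H 2 0 * H 0 0 = 0 := by
    have := congrFun (congrFun hform 0) 0
    simp [Matrix.mul_apply, Smat, Fin.sum_univ_three, Matrix.transpose_apply,
      Matrix.vecHead, Matrix.vecTail] at this
    linear_combination this
  obtain ⟨g₁, hcol⟩ : ∃ g₁ : GL (Fin 2) F,
      ∀ l, phi ((g₁ : GL (Fin 2) F) : Matrix (Fin 2) (Fin 2) F) l 0 = H l 0 := by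
    by_cases hx : H 0 0 = 0
    · have hy : H 1 0 = 0 := by
        have h5 : H 1 0 * H 1 0 = 0 := by rw [hx] at E00; linear_combination E00
        exact mul_self_eq_zero.mp h5
      have hz : H 2 0 ≠ 0 := by
        intro h0
        rw [Matrix.det_fin_three, hx, hy, h0] at hdet
        simp at hdet
      have hd : (!![0, 1; 2 * H 2 0, 0] : Matrix (Fin 2) (Fin 2) F).det ≠ 0 := by
        rw [Matrix.det_fin_two_of]
        simpa using fun hc => hz ((mul_eq_zero.mp hc).resolve_left h2)
      refine ⟨mkGL _ hd, fun l => ?_⟩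
      have hv : ((mkGL _ hd : GL (Fin 2) F) : Matrix (Fin 2) (Fin 2) F)
          = !![0, 1; 2 * H 2 0, 0] := rfl
      fin_cases l
      · simp [hv, phi, Nmat]
        exact hx.symm
      · simp [hv, phi, Nmat]
        exact hy.symm
      · simp [hv, phi, Nmat, Matrix.det_fin_two]
        field_simp
    · have hd : (!![H 0 0, 0; -H 1 0, 1] : Matrix (Fin 2) (Fin 2) F).det ≠ 0 := by
        rw [Matrix.det_fin_two_of]; simpa using hx
      refine ⟨mkGL _ hd, fun l => ?_⟩
      have hv : ((mkGL _ hd : GL (Fin 2) F) : Matrix (Fin 2) (Fin 2) F)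
          = !![H 0 0, 0; -H 1 0, 1] := rfl
      fin_cases l
      · simp [hv, phi, Nmat, Matrix.det_fin_two]
        field_simp
      · simp [hv, phi, Nmat, Matrix.det_fin_two]
        field_simp
      · simp [hv, phi, Nmat, Matrix.det_fin_two]
        field_simp
        linear_combination -E00
  set k : SOq F := (PhiHom h2 g₁)⁻¹ * ⟨h, hmem⟩ with hkdef
  obtain ⟨hdK, hfK⟩ := (mem_SOq_iff _).mp k.2
  set K : Matrix (Fin 3) (Fin 3) F := ((k : SOq F) : (Matrix (Fin 3) (Fin 3) F)ˣ).val
    with hKdef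
  have hK : K = phi ((g₁⁻¹ : GL (Fin 2) F) : Matrix (Fin 2) (Fin 2) F) * H := rfl
  have hKcol : ∀ i, K i 0 = (1 : Matrix (Fin 3) (Fin 3) F) i 0 := by
    intro i
    rw [hK, Matrix.mul_apply]
    have step : (∑ l, phi ((g₁⁻¹ : GL (Fin 2) F) : Matrix (Fin 2) (Fin 2) F) i l * H l 0)
        = ∑ l, phi ((g₁⁻¹ : GL (Fin 2) F) : Matrix (Fin 2) (Fin 2) F) i l *
            phi ((g₁ : GL (Fin 2) F) : Matrix (Fin 2) (Fin 2) F) l 0 :=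
      Finset.sum_congr rfl (fun l _ => by rw [hcol l])
    rw [step, ← Matrix.mul_apply, ← phi_mul h2 (detGL_ne g₁⁻¹) (detGL_ne g₁),
      ← Units.val_mul, inv_mul_cancel g₁, Units.val_one, phi_one h2]
  have hK00 : K 0 0 = 1 := by simpa [Matrix.one_apply] using hKcol 0
  have hK10 : K 1 0 = 0 := by simpa [Matrix.one_apply] using hKcol 1
  have hK20 : K 2 0 = 0 := by simpa [Matrix.one_apply] using hKcol 2
  have EK01 : K 0 0 * K 2 1 + K 1 0 * K 1 1 + K 2 0 * K 0 1 = 0 := by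
    have := congrFun (congrFun hfK 0) 1
    simp [Matrix.mul_apply, Smat, Fin.sum_univ_three, Matrix.transpose_apply,
      Matrix.vecHead, Matrix.vecTail] at this
    linear_combination this
  have EK02 : K 0 0 * K 2 2 + K 1 0 * K 1 2 + K 2 0 * K 0 2 = 1 := by
    have := congrFun (congrFun hfK 0) 2
    simp [Matrix.mul_apply, Smat, Fin.sum_univ_three, Matrix.transpose_apply,
      Matrix.vecHead, Matrix.vecTail] at this
    linear_combination this
  have EK12 : K 0 1 * K 2 2 + K 1 1 * K 1 2 + K 2 1 * K 0 2 = 0 := by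
    have := congrFun (congrFun hfK 1) 2
    simp [Matrix.mul_apply, Smat, Fin.sum_univ_three, Matrix.transpose_apply,
      Matrix.vecHead, Matrix.vecTail] at this
    linear_combination this
  have EK22 : K 0 2 * K 2 2 + K 1 2 * K 1 2 + K 2 2 * K 0 2 = 0 := by
    have := congrFun (congrFun hfK 2) 2
    simp [Matrix.mul_apply, Smat, Fin.sum_univ_three, Matrix.transpose_apply,
      Matrix.vecHead, Matrix.vecTail] at this
    linear_combination this
  have hK21 : K 2 1 = 0 := by
    rw [hK00, hK10, hK20] at EK01; linear_combination EK01
  have hK22 : K 2 2 = 1 := by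
    rw [hK00, hK10, hK20] at EK02; linear_combination EK02
  have hK11 : K 1 1 = 1 := by
    have hd := hdK
    rw [Matrix.det_fin_three, hK00, hK10, hK20, hK21, hK22] at hd
    linear_combination hd
  have hK01 : K 0 1 = -K 1 2 := by
    rw [hK11, hK21, hK22] at EK12; linear_combination EK12
  have hK02 : 2 * K 0 2 + K 1 2 * K 1 2 = 0 := by
    rw [hK22] at EK22; linear_combination EK22
  have hd2 : (!![(1:F), 2⁻¹ * K 1 2; 0, 1] : Matrix (Fin 2) (Fin 2) F).det ≠ 0 := by
    rw [Matrix.det_fin_two_of]; simp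
  set g₂ : GL (Fin 2) F := mkGL _ hd2 with hg2def
  have hg2v : ((g₂ : GL (Fin 2) F) : Matrix (Fin 2) (Fin 2) F)
      = !![(1:F), 2⁻¹ * K 1 2; 0, 1] := rfl
  have claim : phi ((g₂ : GL (Fin 2) F) : Matrix (Fin 2) (Fin 2) F) = K := by
    ext i j
    fin_cases i <;> fin_cases j <;>
      simp [hg2v, phi, Nmat, Matrix.det_fin_two, Matrix.vecHead, Matrix.vecTail]
    · rw [hK00]; field_simp
    · rw [hK01]; field_simp; ring
    · field_simp
      show -(4 * K 1 2 ^ 2) = 2 ^ 3 * K 0 2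
      linear_combination (-4 : F) * hK02
    · exact hK10.symm
    · rw [hK11]; field_simp
    · field_simp; ring
    · exact hK20.symm
    · exact hK21.symm
    · rw [hK22]; field_simp
  have hgk : PhiHom h2 g₂ = k := Subtype.ext (Units.ext claim)
  refine ⟨g₁ * g₂, ?_⟩
  rw [MonoidHom.map_mul, hgk, hkdef, mul_inv_cancel_left]


/-- for a field `F` with `char F ≠ 2`, the special orthogonal group of
the quadratic form `q(x,y,z) = 2xz + y²` is isomorphic to `PGL₂(F)`. -/
theorem stmt12 (F : Type) [Field F] (hchar : ringChar F ≠ 2) :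
    Nonempty (SOq F ≃* PGL2 F) := by
  have h2 : (2 : F) ≠ 0 := Ring.two_ne_zero hchar
  exact ⟨(QuotientGroup.quotientKerEquivOfSurjective (PhiHom h2)
    (PhiHom_surjective h2)).symm.trans (QuotientGroup.quotientMulEquivOfEq (ker_PhiHom h2))⟩
end

section
/- Let G be a group, H ◁ G a normal subgroup with a splitting s : G/H → G of the quotient map, and M a G-module with trivial H-action. Then the restriction-inflation sequence splits and H¹(G, M) ≅ H¹(G/H, M) ⊕ Hom_{G/H}(H^ab, M). -/
open groupCohomology

/-- The `G`-module obtained from a `G/N`-module `M` by inflation along the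
quotient map `G → G/N`; its `H¹` is `H¹(G, M)` where `N` acts trivially on `M`. -/
noncomputable def inflRep (G : Type) [Group G] (N : Subgroup G) [N.Normal]
    (M : Rep ℤ (G ⧸ N)) : Rep ℤ G :=
  Rep.res (QuotientGroup.mk' N) M

/-- `Hom_Q(N^ab, M)`: the `Q = G/N`-equivariant additive homomorphisms from the
abelianization of `N` to `M`, where `Q` acts on `N^ab` by conjugation in `G`. -/
noncomputable def eqvHomsAb (G : Type) [Group G] (N : Subgroup G) [N.Normal]
    (M : Rep ℤ (G ⧸ N)) : AddSubgroup (Additive (Abelianization ↥N) →+ M) where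
  carrier := {f | ∀ (g : G) (n : ↥N),
    f (Additive.ofMul (Abelianization.of (MulAut.conjNormal g n))) =
      M.ρ (QuotientGroup.mk g) (f (Additive.ofMul (Abelianization.of n)))}
  zero_mem' := by intro g n; simp
  add_mem' := by
    intro f f' hf hf' g n
    simp [hf g n, hf' g n]
  neg_mem' := by
    intro f hf g n
    simp [hf g n]

namespace Stmt13
variable {G : Type} [Group G] {N : Subgroup G} [N.Normal] {M : Rep ℤ (G ⧸ N)}

lemma inflRep_ρ (g : G) (m : M) :
    (inflRep G N M).ρ g m = M.ρ (QuotientGroup.mk g) m := rfl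

lemma cocycle_mul (f : cocycles₁ (inflRep G N M)) (g h : G) :
    f (g * h) = (inflRep G N M).ρ g (f h) + f g :=
  (mem_cocycles₁_iff (f : G → (inflRep G N M))).1 f.2 g h

lemma ρ_one_apply (g : G) (hg : g ∈ N) (m : M) :
    (inflRep G N M).ρ g m = m := by
  rw [inflRep_ρ, (QuotientGroup.eq_one_iff g).2 hg, map_one]; rfl

lemma cocycle_N (f : cocycles₁ (inflRep G N M)) (n : ↥N) (h : G) :
    f ((n : G) * h) = (f h : M) + f (n : G) := by
  erw [cocycle_mul f n h, ρ_one_apply (n : G) n.2]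

noncomputable def resHomAux (f : cocycles₁ (inflRep G N M)) : ↥N →* Multiplicative M where
  toFun n := Multiplicative.ofAdd (f (n : G))
  map_one' := congrArg Multiplicative.ofAdd (cocycles₁_map_one f)
  map_mul' n n' := by
    show Multiplicative.ofAdd (f ((n : G) * (n' : G))) = _
    rw [cocycle_N f n n', add_comm]
    rfl

noncomputable def resHom (f : cocycles₁ (inflRep G N M)) :
    Additive (Abelianization ↥N) →+ M where
  toFun x := Multiplicative.toAdd (Abelianization.lift (resHomAux f) x.toMul)
  map_zero' := congrArg Multiplicative.toAdd (map_one (Abelianization.lift (resHomAux f)))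
  map_add' x y := congrArg Multiplicative.toAdd
    (map_mul (Abelianization.lift (resHomAux f)) x.toMul y.toMul)

@[simp] lemma resHom_of (f : cocycles₁ (inflRep G N M)) (n : ↥N) :
    resHom f (Additive.ofMul (Abelianization.of n)) = f (n : G) := rfl

lemma addHom_ext {φ ψ : Additive (Abelianization ↥N) →+ M}
    (h : ∀ n : ↥N, φ (Additive.ofMul (Abelianization.of n)) =
      ψ (Additive.ofMul (Abelianization.of n))) : φ = ψ := by
  ext x
  exact h x

lemma cocycle_conj (f : cocycles₁ (inflRep G N M)) (g : G) (n : ↥N) :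
    f (g * (n : G) * g⁻¹) = M.ρ (QuotientGroup.mk g) (f (n : G)) := by
  have h1 : f (g * ((n : G) * g⁻¹)) = (inflRep G N M).ρ g (f ((n:G) * g⁻¹)) + f g :=
    cocycle_mul f g _
  have h2 : f ((n : G) * g⁻¹) = (f g⁻¹ : M) + f (n : G) := cocycle_N f n g⁻¹
  have h3 : (inflRep G N M).ρ g (f g⁻¹) = - f g := cocycles₁_map_inv f g
  erw [mul_assoc, h1, h2, map_add, h3, inflRep_ρ]
  abel

lemma resHom_mem (f : cocycles₁ (inflRep G N M)) : resHom f ∈ eqvHomsAb G N M := by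
  intro g n
  rw [resHom_of, resHom_of, MulAut.conjNormal_apply, cocycle_conj]

variable (σ : G ⧸ N →* G) (hσ : ∀ q : G ⧸ N, QuotientGroup.mk' N (σ q) = q)

include hσ in
lemma mk_σ (q : G ⧸ N) : (QuotientGroup.mk (σ q) : G ⧸ N) = q := hσ q

/-- pullback of a cocycle along σ -/
noncomputable def σCocycle (f : cocycles₁ (inflRep G N M)) : cocycles₁ M :=
  ⟨fun q => f (σ q), (mem_cocycles₁_iff _).2 fun q q' => by
    show f (σ (q * q')) = _
    erw [map_mul σ, cocycle_mul f (σ q) (σ q'), inflRep_ρ, mk_σ σ hσ]; rfl⟩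

lemma σCocycle_apply (f : cocycles₁ (inflRep G N M)) (q : G ⧸ N) :
    σCocycle σ hσ f q = f (σ q) := rfl

/-- the N-part of g : G -/
def npart (g : G) : ↥N :=
  ⟨g * (σ (QuotientGroup.mk g))⁻¹, by
    rw [← QuotientGroup.eq_one_iff, QuotientGroup.mk_mul, QuotientGroup.mk_inv,
      mk_σ σ hσ, mul_inv_cancel]⟩

lemma npart_mul (g g' : G) :
    npart σ hσ (g * g') =
      npart σ hσ g * MulAut.conjNormal (σ (QuotientGroup.mk g)) (npart σ hσ g') := by
  ext
  show g * g' * (σ (QuotientGroup.mk (g * g')))⁻¹ = _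
  rw [Subgroup.coe_mul, MulAut.conjNormal_apply]
  show _ = g * (σ (QuotientGroup.mk g))⁻¹ *
    (σ (QuotientGroup.mk g) * (g' * (σ (QuotientGroup.mk g'))⁻¹) * (σ (QuotientGroup.mk g))⁻¹)
  rw [QuotientGroup.mk_mul, map_mul σ, mul_inv_rev]
  group

lemma npart_of_mem (n : ↥N) : npart σ hσ (n : G) = n := by
  ext
  show (n : G) * (σ (QuotientGroup.mk (n : G)))⁻¹ = (n : G)
  rw [(QuotientGroup.eq_one_iff (n : G)).2 n.2, map_one, inv_one, mul_one]

lemma npart_σ (q : G ⧸ N) : npart σ hσ (σ q) = 1 := by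
  ext
  show σ q * (σ (QuotientGroup.mk (σ q)))⁻¹ = 1
  rw [mk_σ σ hσ, mul_inv_cancel]

/-- build a cocycle on G from a cocycle on Q and an equivariant hom -/
noncomputable def buildCocycle (h : cocycles₁ M) (φ : eqvHomsAb G N M) :
    cocycles₁ (inflRep G N M) :=
  ⟨fun g => (φ.1 (Additive.ofMul (Abelianization.of (npart σ hσ g))) : M) +
      h (QuotientGroup.mk g),
   (mem_cocycles₁_iff _).2 fun g g' => by
    show (φ.1 (Additive.ofMul (Abelianization.of (npart σ hσ (g * g')))) : M) + _ = _
    rw [npart_mul σ hσ g g']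
    rw [Abelianization.of.map_mul, ofMul_mul, map_add]
    rw [φ.2 (σ (QuotientGroup.mk g)) (npart σ hσ g'), mk_σ σ hσ]
    have hh : h (QuotientGroup.mk (g * g')) =
        M.ρ (QuotientGroup.mk g) (h (QuotientGroup.mk g')) + h (QuotientGroup.mk g) := by
      rw [QuotientGroup.mk_mul]
      exact (mem_cocycles₁_iff (h : (G ⧸ N) → M)).1 h.2 _ _
    rw [hh, inflRep_ρ, map_add]
    abel⟩

lemma buildCocycle_apply (h : cocycles₁ M) (φ : eqvHomsAb G N M) (g : G) :
    buildCocycle σ hσ h φ g =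
      (φ.1 (Additive.ofMul (Abelianization.of (npart σ hσ g))) : M) +
        h (QuotientGroup.mk g) := rfl

end Stmt13

namespace Stmt13
variable {G : Type} [Group G] {N : Subgroup G} [N.Normal] {M : Rep ℤ (G ⧸ N)}
variable (σ : G ⧸ N →* G) (hσ : ∀ q : G ⧸ N, QuotientGroup.mk' N (σ q) = q)

lemma σCocycle_add (f f' : cocycles₁ (inflRep G N M)) :
    σCocycle σ hσ (f + f') = σCocycle σ hσ f + σCocycle σ hσ f' := by
  apply Subtype.ext; funext q; rfl

lemma resHom_add (f f' : cocycles₁ (inflRep G N M)) :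
    resHom (f + f') = resHom f + resHom f' := by
  apply addHom_ext; intro n; rfl

noncomputable def Φ : cocycles₁ (inflRep G N M) →+ H1 M × eqvHomsAb G N M where
  toFun f := (H1π M (σCocycle σ hσ f), ⟨resHom f, resHom_mem f⟩)
  map_zero' := by
    refine Prod.ext ?_ ?_
    · show H1π M (σCocycle σ hσ 0) = 0
      have : σCocycle σ hσ (0 : cocycles₁ (inflRep G N M)) = 0 := by
        apply Subtype.ext; funext q; rfl
      rw [this, map_zero]
    · apply Subtype.ext
      apply addHom_ext; intro n; rfl
  map_add' f f' := by
    refine Prod.ext ?_ ?_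
    · show H1π M (σCocycle σ hσ (f + f')) = _
      rw [σCocycle_add, map_add]; rfl
    · exact Subtype.ext (resHom_add f f')


lemma mem_cob_iff {K : Type} [Group K] {A : Rep ℤ K} (f : cocycles₁ A) :
    ⇑f ∈ coboundaries₁ A ↔ ∃ x : A, ∀ g : K, A.ρ g x - x = f g := by
  simp only [coboundaries₁, LinearMap.mem_range, funext_iff]
  rfl

include hσ in
lemma Φ_surjective : Function.Surjective (Φ σ hσ (M := M)) := by
  rintro ⟨y, φ⟩
  obtain ⟨h, rfl⟩ : ∃ h, H1π M h = y := H1_induction_on (C := fun y => ∃ h, H1π M h = y) y fun h => ⟨h, rfl⟩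
  refine ⟨buildCocycle σ hσ h φ, Prod.ext ?_ ?_⟩
  · show H1π M (σCocycle σ hσ (buildCocycle σ hσ h φ)) = _
    have : σCocycle σ hσ (buildCocycle σ hσ h φ) = h := by
      apply Subtype.ext; funext q
      show buildCocycle σ hσ h φ (σ q) = h q
      rw [buildCocycle_apply, npart_σ σ hσ, mk_σ σ hσ]
      simp
      rfl
    rw [this]
  · apply Subtype.ext
    show resHom (buildCocycle σ hσ h φ) = φ.1
    apply addHom_ext; intro n
    rw [resHom_of, buildCocycle_apply, npart_of_mem σ hσ,
      (QuotientGroup.eq_one_iff (n : G)).2 n.2]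
    simp

lemma g_decomp (g : G) : ((npart σ hσ g : G)) * σ (QuotientGroup.mk g) = g := by
  show g * (σ (QuotientGroup.mk g))⁻¹ * σ (QuotientGroup.mk g) = g
  group

include hσ in
lemma Φ_ker : (Φ σ hσ (M := M)).ker = (H1π (inflRep G N M)).hom.toAddMonoidHom.ker := by
  ext f
  rw [AddMonoidHom.mem_ker, AddMonoidHom.mem_ker, LinearMap.toAddMonoidHom_coe, H1π_eq_zero_iff, Prod.ext_iff]
  constructor
  · rintro ⟨h1, h2⟩
    have hmem : ⇑(σCocycle σ hσ f) ∈ coboundaries₁ M := (H1π_eq_zero_iff _).1 h1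
    obtain ⟨m, hm⟩ := (mem_cob_iff _).1 hmem
    have hres : ∀ n : ↥N, f ((n : G)) = 0 := by
      intro n
      have := congrArg (fun ψ => ψ.1 (Additive.ofMul (Abelianization.of n))) h2
      exact this
    refine (mem_cob_iff _).2 ⟨m, fun g => ?_⟩
    have e : f g = (M.ρ (QuotientGroup.mk g) m : M) - m := by
      conv_lhs => rw [← g_decomp σ hσ g]
      rw [cocycle_N f _ _, hres, add_zero]
      have h3 := hm (QuotientGroup.mk g)
      rw [σCocycle_apply] at h3
      exact h3.symm
    rw [inflRep_ρ]
    exact e.symm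
  · intro hf
    obtain ⟨m, hm⟩ := (mem_cob_iff _).1 hf
    constructor
    · show H1π M (σCocycle σ hσ f) = _
      apply (H1π_eq_zero_iff _).2
      refine (mem_cob_iff _).2 ⟨m, fun q => ?_⟩
      erw [σCocycle_apply, ← hm (σ q), inflRep_ρ, mk_σ σ hσ]; rfl
    · apply Subtype.ext
      show resHom f = 0
      apply addHom_ext; intro n
      erw [resHom_of, ← hm ((n : G)), ρ_one_apply (n : G) n.2]
      simp
      rfl

end Stmt13

/-- let `N ◁ G` be a normal subgroup such that the quotient map
`G → Q = G/N` admits a group-theoretic section `σ`, and let `M` be a `G`-module on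
which `N` acts trivially (i.e. a `Q`-module, inflated to `G`). Then the
inflation-restriction sequence splits and
`H¹(G, M) ≅ H¹(Q, M) ⊕ Hom_Q(N^ab, M)`. -/
theorem stmt13 (G : Type) [Group G] (N : Subgroup G) [N.Normal]
    (σ : G ⧸ N →* G) (hσ : ∀ q : G ⧸ N, QuotientGroup.mk' N (σ q) = q)
    (M : Rep ℤ (G ⧸ N)) :
    Nonempty ((groupCohomology.H1 (inflRep G N M)) ≃+
      (groupCohomology.H1 M × eqvHomsAb G N M)) := by
  exact ⟨((QuotientAddGroup.quotientKerEquivOfSurjective _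
    (fun y => H1_induction_on (C := fun y => ∃ h, (H1π (inflRep G N M)).hom.toAddMonoidHom h = y) y
      fun h => ⟨h, rfl⟩)).symm.trans
    (QuotientAddGroup.quotientAddEquivOfEq (Stmt13.Φ_ker σ hσ).symm)).trans
    (QuotientAddGroup.quotientKerEquivOfSurjective _ (Stmt13.Φ_surjective σ hσ))⟩
end
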